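/- Let (x, a, p, s) ∈ ℂ⁴. Then: (1) if (x, a, p, s) lies in the closure of 𝔽, then (s, ax−p) ∈ Γ, (s, −p) ∈ Γ, (x, a, p) lies in the closure of 𝔼, and (a, s, −p) lies in the closure of ℙ; (2) (x, a, p) lies in the closure of 𝔼 if and only if (x, a, p, 0) lies in the closure of 𝔽; (3) (s, p) ∈ Γ if and only if (0, 0, −p, s) lies in the closure of 𝔽. -/

import Mathlib

/-- The operator norm of a 2×2 complex matrix, acting on the Euclidean space ℂ². -/
noncomputable def opNorm (A : Matrix (Fin 2) (Fin 2) ℂ) : ℝ :=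
  ‖LinearMap.toContinuousLinearMap (Matrix.toEuclideanLin A)‖

/-- The domain 𝔽 = {(a₁₁, a₂₂, det A, a₁₂ + a₂₁) : A ∈ M₂(ℂ), ‖A‖ < 1}. -/
noncomputable def domF : Set (ℂ × ℂ × ℂ × ℂ) :=
  {w | ∃ A : Matrix (Fin 2) (Fin 2) ℂ, opNorm A < 1 ∧
    w = (A 0 0, A 1 1, A.det, A 0 1 + A 1 0)}

/-- The closed symmetrized bidisc Γ. -/
def GammaSet : Set (ℂ × ℂ) :=
  {w | ∃ z1 z2 : ℂ, ‖z1‖ ≤ 1 ∧ ‖z2‖ ≤ 1 ∧ w = (z1 + z2, z1 * z2)}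

/-- The tetrablock 𝔼. -/
def tetraE : Set (ℂ × ℂ × ℂ) :=
  {x | ∀ z1 z2 : ℂ, ‖z1‖ ≤ 1 → ‖z2‖ ≤ 1 →
    1 - x.1 * z1 - x.2.1 * z2 + x.2.2 * z1 * z2 ≠ 0}

/-- The pentablock ℙ = {(a₂₁, a₁₁ + a₂₂, det A) : A ∈ M₂(ℂ), ‖A‖ < 1}. -/
noncomputable def pentaP : Set (ℂ × ℂ × ℂ) :=
  {w | ∃ A : Matrix (Fin 2) (Fin 2) ℂ, opNorm A < 1 ∧
    w = (A 1 0, A 0 0 + A 1 1, A.det)}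

/-! A point of `closure 𝔽` is the image of a contraction `A`, the closed unit ball of `M₂(ℂ)`
being compact. Then `(s, ax - p) = (a₁₂ + a₂₁, a₁₂a₂₁)` with `|aᵢⱼ| ≤ 1`; swapping the columns
of `A` gives a contraction `B` with `tr B = s`, `det B = -p` and `b₂₁ = a`, whose eigenvalues lie
in the closed disc; and `1 - a₁₁z₁ - a₂₂z₂ + (det A)z₁z₂ = det (1 - A diag(z₁, z₂))`.

Conversely, fixing `z₂ = ω` on the unit circle, a point `x ∈ 𝔼` satisfies
`|x₁ - x₃ω| < |1 - x₂ω|`; optimising over `ω` and using the symmetry `x₁ ↔ x₂` gives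
`|x₁|² + |x₂|² + 2|x₁x₂ - x₃| < 1 + |x₃|²`. This says that `[[x₁, β], [-β, x₂]]` with
`β² = x₃ - x₁x₂` is a contraction, since a `2 × 2` matrix whose squared Frobenius norm is at most
`2` and at most `1 + |det|²` is one. Similarly `[[0, z₁], [z₂, 0]]` is a column swap of
`diag(z₁, z₂)`. -/

open scoped Matrix.Norms.L2Operator ComplexConjugate
open Matrix Set Metric

theorem Continuous.closure_image_ball {E X : Type*} [NormedAddCommGroup E] [NormedSpace ℝ E]
    [ProperSpace E] [TopologicalSpace X] [T2Space X] {f : E → X} (hf : Continuous f) (x : E)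
    {r : ℝ} (hr : r ≠ 0) : closure (f '' ball x r) = f '' closedBall x r := by
  refine (closure_minimal (image_mono ball_subset_closedBall)
    ((isCompact_closedBall x r).image hf).isClosed).antisymm ?_
  rw [← closure_ball x hr]
  exact image_closure_subset_closure_image hf

lemma two_mul_mul_mul_le_of_sq_le_mul {p q g : ℝ} (hpq : 0 ≤ p + q) (hg : g ^ 2 ≤ p * q)
    (x y : ℝ) : 2 * x * y * g ≤ p * x ^ 2 + q * y ^ 2 := by
  have hp : 0 ≤ p := by nlinarith [sq_nonneg g]
  rcases hp.eq_or_lt with rfl | hp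
  · have hg₀ : g = 0 :=
      pow_eq_zero_iff two_ne_zero |>.mp (le_antisymm (by simpa using hg) (sq_nonneg g))
    subst hg₀
    nlinarith [sq_nonneg y]
  · nlinarith [sq_nonneg (p * x - g * y), mul_nonneg hp.le (sq_nonneg y)]

namespace Complex

lemma norm_sq_mul_add_mul_add_norm_sq_mul_add_mul (a b c d v w : ℂ) :
    ‖a * v + b * w‖ ^ 2 + ‖c * v + d * w‖ ^ 2
      = (‖a‖ ^ 2 + ‖c‖ ^ 2) * ‖v‖ ^ 2 + (‖b‖ ^ 2 + ‖d‖ ^ 2) * ‖w‖ ^ 2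
        + 2 * (v * conj w * (a * conj b + c * conj d)).re := by
  simp only [Complex.sq_norm, normSq_apply, add_re, add_im, mul_re, mul_im, conj_re, conj_im]
  ring

lemma norm_sq_mul_conj_add_mul_conj_add_norm_sq_mul_sub_mul (a b c d : ℂ) :
    ‖a * conj b + c * conj d‖ ^ 2 + ‖a * d - b * c‖ ^ 2
      = (‖a‖ ^ 2 + ‖c‖ ^ 2) * (‖b‖ ^ 2 + ‖d‖ ^ 2) := by
  simp only [Complex.sq_norm, normSq_apply, add_re, add_im, sub_re, sub_im, mul_re, mul_im,
    conj_re, conj_im]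
  ring

lemma norm_sq_sub_conj_mul_sub_norm_sq_mul_sub (x₁ x₂ x₃ : ℂ) :
    ‖x₁ - conj x₂ * x₃‖ ^ 2 - ‖x₁ * x₂ - x₃‖ ^ 2
      = (‖x₁‖ ^ 2 - ‖x₃‖ ^ 2) * (1 - ‖x₂‖ ^ 2) := by
  simp only [Complex.sq_norm, normSq_apply, sub_re, sub_im, mul_re, mul_im, conj_re, conj_im]
  ring

end Complex

namespace Matrix

theorem norm_entry_le_l2_opNorm {𝕜 m n : Type*} [RCLike 𝕜] [Fintype m] [Fintype n]
    [DecidableEq n] (A : Matrix m n 𝕜) (i : m) (j : n) : ‖A i j‖ ≤ ‖A‖ :=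
  calc ‖A i j‖ = ‖((EuclideanSpace.equiv m 𝕜).symm (A *ᵥ Pi.single j 1)) i‖ := by simp
    _ ≤ _ := PiLp.norm_apply_le _ i
    _ ≤ ‖A‖ := by simpa using A.l2_opNorm_mulVec (WithLp.toLp 2 (Pi.single j 1))

theorem l2_opNorm_submatrix_id_le {𝕜 m n : Type*} [RCLike 𝕜] [Fintype m] [Fintype n]
    [DecidableEq n] (A : Matrix m n 𝕜) (σ : Equiv.Perm n) : ‖A.submatrix id σ‖ ≤ ‖A‖ := by
  have hA : A.submatrix id σ = A * σ⁻¹.permMatrix 𝕜 := by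
    rw [Equiv.Perm.permMatrix, PEquiv.mul_toMatrix_toPEquiv]
    rfl
  calc ‖A.submatrix id σ‖ ≤ ‖A‖ * ‖σ⁻¹.permMatrix 𝕜‖ := hA ▸ l2_opNorm_mul _ _
    _ ≤ ‖A‖ := mul_le_of_le_one_right (norm_nonneg A) (permMatrix_l2_opNorm_le _)

lemma l2_opNorm_diagonal_fin_two_le_one {z₁ z₂ : ℂ} (hz₁ : ‖z₁‖ ≤ 1) (hz₂ : ‖z₂‖ ≤ 1) :
    ‖diagonal ![z₁, z₂]‖ ≤ 1 := by
  simpa [pi_norm_le_iff_of_nonneg, Fin.forall_fin_two] using ⟨hz₁, hz₂⟩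

/-- `1 - Aᴴ * A` has trace `2 - ‖A‖_F²` and determinant `1 - ‖A‖_F² + |det A|²`, and a `2 × 2`
Hermitian matrix with nonnegative trace and determinant is positive semidefinite. -/
theorem l2_opNorm_le_one_of_fin_two (A : Matrix (Fin 2) (Fin 2) ℂ)
    (h₁ : ‖A 0 0‖ ^ 2 + ‖A 0 1‖ ^ 2 + ‖A 1 0‖ ^ 2 + ‖A 1 1‖ ^ 2 ≤ 2)
    (h₂ : ‖A 0 0‖ ^ 2 + ‖A 0 1‖ ^ 2 + ‖A 1 0‖ ^ 2 + ‖A 1 1‖ ^ 2 ≤ 1 + ‖A.det‖ ^ 2) :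
    ‖A‖ ≤ 1 := by
  refine ContinuousLinearMap.opNorm_le_bound _ zero_le_one fun v => ?_
  rw [one_mul, ← sq_le_sq₀ (norm_nonneg _) (norm_nonneg _)]
  simp only [EuclideanSpace.norm_sq_eq, Fin.sum_univ_two, LinearEquiv.trans_apply,
    LinearMap.coe_toContinuousLinearMap', toLpLin_apply, mulVec, dotProduct]
  have hlagrange :=
    Complex.norm_sq_mul_conj_add_mul_conj_add_norm_sq_mul_sub_mul (A 0 0) (A 0 1) (A 1 0) (A 1 1)
  rw [← det_fin_two] at hlagrange
  set g := A 0 0 * conj (A 0 1) + A 1 0 * conj (A 1 1)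
  have hcross : (v 0 * conj (v 1) * g).re ≤ ‖v 0‖ * ‖v 1‖ * ‖g‖ := by
    simpa only [norm_mul, Complex.norm_conj] using Complex.re_le_norm (v 0 * conj (v 1) * g)
  have hamgm := two_mul_mul_mul_le_of_sq_le_mul
    (p := 1 - (‖A 0 0‖ ^ 2 + ‖A 1 0‖ ^ 2)) (q := 1 - (‖A 0 1‖ ^ 2 + ‖A 1 1‖ ^ 2)) (g := ‖g‖)
    (by linarith) (by nlinarith) ‖v 0‖ ‖v 1‖
  rw [Complex.norm_sq_mul_add_mul_add_norm_sq_mul_add_mul]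
  nlinarith

lemma det_smul_one_sub_fin_two (B : Matrix (Fin 2) (Fin 2) ℂ) (z : ℂ) :
    (z • 1 - B).det = z ^ 2 - B.trace * z + B.det := by
  simp only [det_fin_two, trace_fin_two, sub_apply, smul_apply, one_apply_eq, smul_eq_mul,
    one_apply_ne zero_ne_one, one_apply_ne one_ne_zero]
  ring

lemma norm_le_l2_opNorm_of_charpoly_root {B : Matrix (Fin 2) (Fin 2) ℂ} {z : ℂ}
    (hz : z ^ 2 - B.trace * z + B.det = 0) : ‖z‖ ≤ ‖B‖ := by
  refine spectrum.norm_le_norm_of_mem (spectrum.mem_iff.mpr fun hunit => ?_)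
  rw [Algebra.algebraMap_eq_smul_one, isUnit_iff_isUnit_det, det_smul_one_sub_fin_two, hz] at hunit
  exact not_isUnit_zero hunit

theorem trace_det_mem_GammaSet {B : Matrix (Fin 2) (Fin 2) ℂ} (hB : ‖B‖ ≤ 1) :
    (B.trace, B.det) ∈ GammaSet := by
  have hroot : ∀ z, z ^ 2 - B.trace * z + B.det = 0 → ‖z‖ ≤ 1 :=
    fun z hz => (norm_le_l2_opNorm_of_charpoly_root hz).trans hB
  obtain ⟨w, hw⟩ := IsAlgClosed.exists_pow_nat_eq (B.trace ^ 2 - 4 * B.det) two_pos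
  refine ⟨(B.trace + w) / 2, (B.trace - w) / 2, hroot _ (by linear_combination hw / 4),
    hroot _ (by linear_combination hw / 4), ?_⟩
  ext
  · ring
  · linear_combination hw / 4

end Matrix

lemma opNorm_eq_norm (A : Matrix (Fin 2) (Fin 2) ℂ) : opNorm A = ‖A‖ := rfl

lemma closure_domF : closure domF =
    (fun A : Matrix (Fin 2) (Fin 2) ℂ => (A 0 0, A 1 1, A.det, A 0 1 + A 1 0)) ''
      closedBall 0 1 := by
  rw [← Continuous.closure_image_ball (by fun_prop) 0 one_ne_zero]
  congr 1
  ext w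
  simp only [domF, opNorm_eq_norm, mem_ofPred_eq, mem_image, mem_ball_zero_iff, eq_comm]

lemma closure_pentaP : closure pentaP =
    (fun A : Matrix (Fin 2) (Fin 2) ℂ => (A 1 0, A 0 0 + A 1 1, A.det)) '' closedBall 0 1 := by
  rw [← Continuous.closure_image_ball (by fun_prop) 0 one_ne_zero]
  congr 1
  ext w
  simp only [pentaP, opNorm_eq_norm, mem_ofPred_eq, mem_image, mem_ball_zero_iff, eq_comm]

lemma mem_tetraE_of_norm_lt_one {A : Matrix (Fin 2) (Fin 2) ℂ} (hA : ‖A‖ < 1) :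
    (A 0 0, A 1 1, A.det) ∈ tetraE := by
  intro z₁ z₂ hz₁ hz₂
  have hAZ : ‖A * diagonal ![z₁, z₂]‖ < 1 :=
    (l2_opNorm_mul _ _).trans_lt (mul_lt_one_of_nonneg_of_lt_one_left (norm_nonneg A) hA
      (l2_opNorm_diagonal_fin_two_le_one hz₁ hz₂))
  have hdet := (isUnit_iff_isUnit_det _).mp (Units.oneSub _ hAZ).isUnit
  convert hdet.ne_zero using 1
  simp [det_fin_two]
  ring

lemma mem_closure_tetraE_of_norm_le_one {A : Matrix (Fin 2) (Fin 2) ℂ} (hA : ‖A‖ ≤ 1) :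
    (A 0 0, A 1 1, A.det) ∈ closure tetraE := by
  set f := fun A : Matrix (Fin 2) (Fin 2) ℂ => (A 0 0, A 1 1, A.det)
  have hball : f '' ball 0 1 ⊆ tetraE :=
    image_subset_iff.mpr fun B hB => mem_tetraE_of_norm_lt_one (mem_ball_zero_iff.mp hB)
  rw [← mem_closedBall_zero_iff] at hA
  exact closure_mono hball <|
    (Continuous.closure_image_ball (f := f) (by fun_prop) 0 one_ne_zero).symm ▸
      mem_image_of_mem f hA

section Tetrablock

variable {x₁ x₂ x₃ : ℂ}

lemma tetraE_swap (h : (x₁, x₂, x₃) ∈ tetraE) : (x₂, x₁, x₃) ∈ tetraE :=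
  fun z₁ z₂ hz₁ hz₂ hc => h z₂ z₁ hz₂ hz₁ (by linear_combination hc)

/-- For fixed `z₂ = ω` the defining polynomial is affine in `z₁`, with root
`(1 - x₂ω) / (x₁ - x₃ω)`. -/
lemma norm_sub_mul_lt_of_mem_tetraE (h : (x₁, x₂, x₃) ∈ tetraE) {ω : ℂ} (hω : ‖ω‖ ≤ 1) :
    ‖x₁ - x₃ * ω‖ < ‖1 - x₂ * ω‖ := by
  by_contra! hle
  refine h ((1 - x₂ * ω) / (x₁ - x₃ * ω)) ω ?_ hω ?_
  · rw [norm_div]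
    exact div_le_one_of_le₀ hle (norm_nonneg _)
  rcases eq_or_ne (x₁ - x₃ * ω) 0 with h0 | h0
  · rw [h0, norm_zero, norm_le_zero_iff] at hle
    rw [h0, div_zero]
    linear_combination hle
  · linear_combination -mul_div_cancel₀ (1 - x₂ * ω) h0

lemma norm_lt_one_of_mem_tetraE (h : (x₁, x₂, x₃) ∈ tetraE) : ‖x₁‖ < 1 := by
  simpa using norm_sub_mul_lt_of_mem_tetraE h (ω := 0) (by simp)

lemma two_mul_norm_sub_conj_mul_lt_of_mem_tetraE (h : (x₁, x₂, x₃) ∈ tetraE) :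
    2 * ‖x₂ - conj x₁ * x₃‖ < 1 - ‖x₁‖ ^ 2 + ‖x₂‖ ^ 2 - ‖x₃‖ ^ 2 := by
  set y := x₂ - conj x₁ * x₃
  set ω := Complex.exp (↑(-y.arg) * Complex.I)
  have hω : ‖ω‖ = 1 := Complex.norm_exp_ofReal_mul_I _
  have hyω : y * ω = ‖y‖ := by
    nth_rewrite 1 [← Complex.norm_mul_exp_arg_mul_I y]
    rw [mul_assoc, ← Complex.exp_add]
    simp
  have hω' : ω.re * ω.re + ω.im * ω.im = 1 := by
    rw [← Complex.normSq_apply, ← Complex.sq_norm, hω, one_pow]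
  have key : ‖1 - x₂ * ω‖ ^ 2 - ‖x₁ - x₃ * ω‖ ^ 2
      = 1 - ‖x₁‖ ^ 2 + ‖x₂‖ ^ 2 - ‖x₃‖ ^ 2 - 2 * (y * ω).re := by
    simp only [y, Complex.sq_norm, Complex.normSq_apply, Complex.sub_re, Complex.sub_im,
      Complex.mul_re, Complex.mul_im, Complex.conj_re, Complex.conj_im, Complex.one_re,
      Complex.one_im]
    linear_combination (x₂.re * x₂.re + x₂.im * x₂.im - x₃.re * x₃.re - x₃.im * x₃.im) * hω'
  rw [hyω, Complex.ofReal_re] at key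
  have := pow_lt_pow_left₀ (norm_sub_mul_lt_of_mem_tetraE h hω.le) (norm_nonneg _) two_ne_zero
  linarith

lemma norm_lt_one_and_sq_add_sq_add_two_mul_lt_of_mem_tetraE (h : (x₁, x₂, x₃) ∈ tetraE) :
    ‖x₃‖ < 1 ∧ ‖x₁‖ ^ 2 + ‖x₂‖ ^ 2 + 2 * ‖x₁ * x₂ - x₃‖ < 1 + ‖x₃‖ ^ 2 := by
  have ha := norm_lt_one_of_mem_tetraE h
  have hb := norm_lt_one_of_mem_tetraE (tetraE_swap h)
  have h₁ := two_mul_norm_sub_conj_mul_lt_of_mem_tetraE h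
  have h₂ := two_mul_norm_sub_conj_mul_lt_of_mem_tetraE (tetraE_swap h)
  have hid := Complex.norm_sq_sub_conj_mul_sub_norm_sq_mul_sub x₁ x₂ x₃
  have hA₁ := norm_sub_norm_le x₂ (conj x₁ * x₃)
  have hA₂ := norm_sub_norm_le x₁ (conj x₂ * x₃)
  have hm := norm_sub_norm_le (x₁ * x₂) x₃
  rw [norm_mul, Complex.norm_conj] at hA₁ hA₂
  rw [norm_mul] at hm
  set a := ‖x₁‖
  set b := ‖x₂‖
  set c := ‖x₃‖
  set m := ‖x₁ * x₂ - x₃‖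
  set r := ‖x₁ - conj x₂ * x₃‖
  have hbc : |b - c| < 1 - a := abs_lt_of_sq_lt_sq (by nlinarith) (by linarith)
  have hac : |a - c| < 1 - b := abs_lt_of_sq_lt_sq (by nlinarith) (by linarith)
  have hab : |a - b| < 1 - c := abs_sub_lt_iff.mpr
    ⟨by linarith [neg_abs_le (b - c)], by linarith [neg_abs_le (a - c)]⟩
  have hpos : 0 < 1 + c ^ 2 - a ^ 2 - b ^ 2 + 2 * m := by
    nlinarith [sq_abs (a - b), abs_nonneg (a - b)]
  refine ⟨by linarith [abs_nonneg (a - b)], ?_⟩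
  -- `(T - 2m)(T + 2m) = (D - 2r)(D + 2r)` for `T = 1 + c² - a² - b²`, `D = 1 + a² - b² - c²`
  have hr : 0 ≤ r := norm_nonneg _
  nlinarith [mul_pos (by linarith : 0 < 1 + a ^ 2 - b ^ 2 - c ^ 2 - 2 * r)
    (by linarith : 0 < 1 + a ^ 2 - b ^ 2 - c ^ 2 + 2 * r)]

lemma exists_matrix_of_mem_tetraE (h : (x₁, x₂, x₃) ∈ tetraE) :
    ∃ A : Matrix (Fin 2) (Fin 2) ℂ, ‖A‖ ≤ 1 ∧
      (A 0 0, A 1 1, A.det, A 0 1 + A 1 0) = (x₁, x₂, x₃, 0) := by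
  obtain ⟨hx₃, hineq⟩ := norm_lt_one_and_sq_add_sq_add_two_mul_lt_of_mem_tetraE h
  obtain ⟨β, hβ⟩ := IsAlgClosed.exists_pow_nat_eq (x₃ - x₁ * x₂) two_pos
  have hβnorm : ‖β‖ ^ 2 = ‖x₁ * x₂ - x₃‖ := by rw [← norm_pow, hβ, norm_sub_rev]
  have hdet : !![x₁, β; -β, x₂].det = x₃ := by
    rw [det_fin_two_of]
    linear_combination hβ
  refine ⟨!![x₁, β; -β, x₂], l2_opNorm_le_one_of_fin_two _ ?_ ?_, by simp [hdet]⟩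
  · simp only [of_apply, cons_val', cons_val_zero, cons_val_one, empty_val', cons_val_fin_one,
      norm_neg]
    nlinarith [norm_nonneg x₃]
  · simp only [of_apply, cons_val', cons_val_zero, cons_val_one, empty_val', cons_val_fin_one,
      norm_neg, hdet]
    linarith

end Tetrablock

lemma closure_tetraE_subset :
    closure tetraE ⊆ (fun y : ℂ × ℂ × ℂ => (y.1, y.2.1, y.2.2, (0 : ℂ))) ⁻¹' closure domF := by
  refine closure_minimal (fun y hy => ?_) (isClosed_closure.preimage (by fun_prop))
  obtain ⟨A, hA, hAy⟩ := exists_matrix_of_mem_tetraE hy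
  rw [closure_domF]
  exact ⟨A, mem_closedBall_zero_iff.mpr hA, hAy⟩

lemma mem_closure_domF_of_mem_GammaSet {s p : ℂ} (h : (s, p) ∈ GammaSet) :
    ((0 : ℂ), (0 : ℂ), -p, s) ∈ closure domF := by
  obtain ⟨z₁, z₂, hz₁, hz₂, hsp⟩ := h
  obtain ⟨rfl, rfl⟩ := Prod.mk.inj hsp
  rw [closure_domF]
  refine ⟨(diagonal ![z₁, z₂]).submatrix id (Equiv.swap 0 1), ?_, ?_⟩
  · exact mem_closedBall_zero_iff.mpr
      ((l2_opNorm_submatrix_id_le _ _).trans (l2_opNorm_diagonal_fin_two_le_one hz₁ hz₂))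
  · simp [det_fin_two]

lemma mem_GammaSet_and_mem_closure_of_mem_closure_domF {x a p s : ℂ}
    (h : (x, a, p, s) ∈ closure domF) :
    (s, a * x - p) ∈ GammaSet ∧ (s, -p) ∈ GammaSet ∧
      (x, a, p) ∈ closure tetraE ∧ (a, s, -p) ∈ closure pentaP := by
  rw [closure_domF] at h
  obtain ⟨A, hA, hAw⟩ := h
  obtain ⟨rfl, rfl, rfl, rfl⟩ : A 0 0 = x ∧ A 1 1 = a ∧ A.det = p ∧ A 0 1 + A 1 0 = s := by
    simpa only [Prod.mk.injEq] using hAw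
  rw [mem_closedBall_zero_iff] at hA
  set B := A.submatrix id (Equiv.swap 0 1)
  have hB : ‖B‖ ≤ 1 := (l2_opNorm_submatrix_id_le A _).trans hA
  have hBtr : B.trace = A 0 1 + A 1 0 := by simp [B, trace_fin_two]
  have hBdet : B.det = -A.det := by simp [B, det_fin_two]
  refine ⟨⟨A 0 1, A 1 0, (norm_entry_le_l2_opNorm A 0 1).trans hA,
    (norm_entry_le_l2_opNorm A 1 0).trans hA, by simp [det_fin_two]; ring⟩,
    hBtr ▸ hBdet ▸ trace_det_mem_GammaSet hB, mem_closure_tetraE_of_norm_le_one hA, ?_⟩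
  rw [closure_pentaP]
  exact ⟨B, mem_closedBall_zero_iff.mpr hB, by simp [B, hBdet]⟩

/-- Corollary 2.10: (1) if (x, a, p, s) ∈ closure 𝔽 then (s, ax−p) ∈ Γ, (s, −p) ∈ Γ,
(x, a, p) ∈ closure 𝔼 and (a, s, −p) ∈ closure ℙ; (2) (x, a, p) ∈ closure 𝔼 iff
(x, a, p, 0) ∈ closure 𝔽; (3) (s, p) ∈ Γ iff (0, 0, −p, s) ∈ closure 𝔽. -/
theorem stmt8 (x a p s : ℂ) :
    ((x, a, p, s) ∈ closure domF →
      (s, a * x - p) ∈ GammaSet ∧ (s, -p) ∈ GammaSet ∧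
      (x, a, p) ∈ closure tetraE ∧ (a, s, -p) ∈ closure pentaP) ∧
    ((x, a, p) ∈ closure tetraE ↔ (x, a, p, (0 : ℂ)) ∈ closure domF) ∧
    ((s, p) ∈ GammaSet ↔ ((0 : ℂ), (0 : ℂ), -p, s) ∈ closure domF) := by
  refine ⟨mem_GammaSet_and_mem_closure_of_mem_closure_domF, ⟨fun h => closure_tetraE_subset h,
    fun h => (mem_GammaSet_and_mem_closure_of_mem_closure_domF h).2.2.1⟩,
    ⟨mem_closure_domF_of_mem_GammaSet, fun h => ?_⟩⟩
  simpa using (mem_GammaSet_and_mem_closure_of_mem_closure_domF h).2.1
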